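/- For the Finsler space with F² = e^{−x2} y1 (y2³+y3³+y4³)^{1/3} on {y2 ≠ 0, y4 ≠ 0, y2³+y3³+y4³ = 0}, the nullity distribution N_ℜ of the Barthel curvature (spanned by h₁, h₂) strictly contains the nullity distribution N_{R̊} of the Berwald h-curvature (spanned by h₁); in particular h₂ ∈ N_ℜ but h₂ ∉ N_{R̊}, so N_ℜ is not contained in N_{R̊}. -/

import Mathlib

/-!
The Barthel connection of this metric does not depend on `x`, so its curvature is
`ℜ^i_{jk} = N^m_k G^i_{jm} - N^m_j G^i_{km}` with `G^i_{jm} = ∂N^i_j/∂y^m`. Every component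
`ℜ^i_{j1}`, `ℜ^i_{j2}` is zero or carries the factor `y2³ + y3³ + y4³`, so `h₁, h₂ ∈ N_ℜ` on the
cone. The Berwald curvature `R̊ = ∂ℜ/∂y` differentiates that factor away:
its components `R̊^3_{4·4}`, `R̊^4_{2·4}`, `R̊^3_{2·3}` force in turn `W³ = 0`, `W² = 0`,
`W⁴ = 0` for `W ∈ N_{R̊}`, so `N_{R̊} ⊆ span h₁`.
-/

open scoped BigOperators

/-- Partial derivative of `f` with respect to the `j`-th coordinate at `v`. -/
noncomputable def pd {n : ℕ} (f : (Fin n → ℝ) → ℝ) (j : Fin n) (v : Fin n → ℝ) : ℝ :=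
  deriv (fun t => f (Function.update v j t)) (v j)

/-- The open set `U`: `y2 ≠ 0`, `y4 ≠ 0`. -/
def U (x y : Fin 4 → ℝ) : Prop := y 1 ≠ 0 ∧ y 3 ≠ 0

/-- The Barthel connection coefficients `N^i_j` of `F² = e^{−x2} y1 (y2³+y3³+y4³)^{1/3}`. -/
noncomputable def NB (x y : Fin 4 → ℝ) : Fin 4 → Fin 4 → ℝ := fun i j =>
  (!![0, 0, 0, 0;
      0, -(4 * (y 1) ^ 3 + (y 2) ^ 3 + (y 3) ^ 3) / (4 * (y 1) ^ 2),
        (3 / 4) * (y 2) ^ 2 / (y 1), (3 / 4) * (y 3) ^ 2 / (y 1);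
      0, -(3 / 4) * (y 2), -(3 / 4) * (y 1), 0;
      0, -(3 / 4) * (y 3), 0, -(3 / 4) * (y 1)] : Matrix (Fin 4) (Fin 4) ℝ) i j

/-- The curvature of the Barthel connection, `ℜ^i_{jk} = δ_j N^i_k − δ_k N^i_j`, where
`δ_k = ∂/∂x^k − N^m_k ∂/∂y^m`. -/
noncomputable def Rg (x y : Fin 4 → ℝ) (i j k : Fin 4) : ℝ :=
  (pd (fun x' => NB x' y i k) j x - ∑ m, NB x y m j * pd (fun y' => NB x y' i k) m y)
    - (pd (fun x' => NB x' y i j) k x - ∑ m, NB x y m k * pd (fun y' => NB x y' i j) m y)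

/-- The h-curvature of the Berwald connection, `R̊^i_{hjk} = ∂̇_h ℜ^i_{jk}`. -/
noncomputable def Rb (x y : Fin 4 → ℝ) (i h j k : Fin 4) : ℝ :=
  pd (fun y' => Rg x y' i j k) h y

open Filter Topology

lemma pd_congr {n : ℕ} {f g : (Fin n → ℝ) → ℝ} {v : Fin n → ℝ} (h : f =ᶠ[𝓝 v] g) (j : Fin n) :
    pd f j v = pd g j v := by
  have hupdate : Tendsto (Function.update v j) (𝓝 (v j)) (𝓝 v) := by
    simpa using (continuous_const.update j continuous_id : Continuous (Function.update v j)).tendsto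
      (v j)
  exact EventuallyEq.deriv_eq (hupdate.eventually h)

lemma pd_const {n : ℕ} (c : ℝ) (j : Fin n) (v : Fin n → ℝ) : pd (fun _ => c) j v = 0 :=
  deriv_const _ c

noncomputable def berwaldCoeff (y : Fin 4 → ℝ) (i j m : Fin 4) : ℝ :=
  (![(0 : Matrix (Fin 4) (Fin 4) ℝ),
     !![0, 0, 0, 0;
        0, -1 + ((y 2) ^ 3 + (y 3) ^ 3) / (2 * (y 1) ^ 3),
          -(3 * (y 2) ^ 2) / (4 * (y 1) ^ 2), -(3 * (y 3) ^ 2) / (4 * (y 1) ^ 2);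
        0, -(3 * (y 2) ^ 2) / (4 * (y 1) ^ 2), 3 * (y 2) / (2 * (y 1)), 0;
        0, -(3 * (y 3) ^ 2) / (4 * (y 1) ^ 2), 0, 3 * (y 3) / (2 * (y 1))],
     !![0, 0, 0, 0; 0, 0, -(3/4), 0; 0, -(3/4), 0, 0; 0, 0, 0, 0],
     !![0, 0, 0, 0; 0, 0, 0, -(3/4); 0, 0, 0, 0; 0, -(3/4), 0, 0]] i) j m

lemma pd_NB_eq_berwaldCoeff (x : Fin 4 → ℝ) {y : Fin 4 → ℝ} (hy : y 1 ≠ 0) (i j m : Fin 4) :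
    pd (fun y' => NB x y' i j) m y = berwaldCoeff y i j m := by
  fin_cases i <;> fin_cases j <;> fin_cases m <;>
    simp (disch := first | fun_prop | simp [hy]) [pd, NB, berwaldCoeff] <;> field_simp <;> ring

lemma Rg_eq_sum (x : Fin 4 → ℝ) {y : Fin 4 → ℝ} (hy : y 1 ≠ 0) (i j k : Fin 4) :
    Rg x y i j k =
      ∑ m, (NB x y m k * berwaldCoeff y i j m - NB x y m j * berwaldCoeff y i k m) := by
  have hx : ∀ j k, pd (fun x' => NB x' y i k) j x = 0 := fun j k => pd_const _ j x
  simp only [Rg, hx, pd_NB_eq_berwaldCoeff x hy, Finset.sum_sub_distrib]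
  ring

noncomputable def barthelCurvature (y : Fin 4 → ℝ) (i j k : Fin 4) : ℝ :=
  (![(0 : Matrix (Fin 4) (Fin 4) ℝ),
     !![0, 0, 0, 0;
        0, 0, 3/16 * (y 2)^2 * ((y 1)^3 + (y 2)^3 + (y 3)^3) / (y 1)^4,
          3/16 * (y 3)^2 * ((y 1)^3 + (y 2)^3 + (y 3)^3) / (y 1)^4;
        0, -(3/16 * (y 2)^2 * ((y 1)^3 + (y 2)^3 + (y 3)^3) / (y 1)^4), 0, 0;
        0, -(3/16 * (y 3)^2 * ((y 1)^3 + (y 2)^3 + (y 3)^3) / (y 1)^4), 0, 0],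
     !![0, 0, 0, 0;
        0, 0, -(3/16 * ((y 1)^3 + (y 2)^3 + (y 3)^3) / (y 1)^2), 0;
        0, 3/16 * ((y 1)^3 + (y 2)^3 + (y 3)^3) / (y 1)^2, 0, -(9/16 * (y 3)^2 / (y 1));
        0, 0, 9/16 * (y 3)^2 / (y 1), 0],
     !![0, 0, 0, 0;
        0, 0, 0, -(3/16 * ((y 1)^3 + (y 2)^3 + (y 3)^3) / (y 1)^2);
        0, 0, 0, 9/16 * (y 2)^2 / (y 1);
        0, 3/16 * ((y 1)^3 + (y 2)^3 + (y 3)^3) / (y 1)^2, -(9/16 * (y 2)^2 / (y 1)), 0]] i) j k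

lemma Rg_eq_barthelCurvature (x : Fin 4 → ℝ) {y : Fin 4 → ℝ} (hy : y 1 ≠ 0) (i j k : Fin 4) :
    Rg x y i j k = barthelCurvature y i j k := by
  rw [Rg_eq_sum x hy, Fin.sum_univ_four]
  fin_cases i <;> fin_cases j <;> fin_cases k <;>
    simp [NB, berwaldCoeff, barthelCurvature] <;> field_simp <;> ring

lemma Rb_eq_pd_barthelCurvature (x : Fin 4 → ℝ) {y : Fin 4 → ℝ} (hy : y 1 ≠ 0)
    (i h j k : Fin 4) : Rb x y i h j k = pd (fun y' => barthelCurvature y' i j k) h y := by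
  refine pd_congr ?_ h
  filter_upwards [(continuous_apply 1).continuousAt.eventually_ne hy] with y' hy'
  exact Rg_eq_barthelCurvature x hy' i j k

lemma Rg_apply_zero (x : Fin 4 → ℝ) {y : Fin 4 → ℝ} (hy : y 1 ≠ 0) (i j : Fin 4) :
    Rg x y i j 0 = 0 := by
  rw [Rg_eq_barthelCurvature x hy]
  fin_cases i <;> fin_cases j <;> simp [barthelCurvature]

lemma Rg_apply_one (x : Fin 4 → ℝ) {y : Fin 4 → ℝ} (hy : y 1 ≠ 0)
    (hT : (y 1) ^ 3 + (y 2) ^ 3 + (y 3) ^ 3 = 0) (i j : Fin 4) : Rg x y i j 1 = 0 := by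
  rw [Rg_eq_barthelCurvature x hy]
  fin_cases i <;> fin_cases j <;> simp [barthelCurvature, hT]

lemma Rb_two_three_three (x : Fin 4 → ℝ) {y : Fin 4 → ℝ} (hy : y 1 ≠ 0) (j : Fin 4) :
    Rb x y 2 3 j 3 = ![0, 0, -(9/8 * y 3 / y 1), 0] j := by
  fin_cases j <;> rw [Rb_eq_pd_barthelCurvature x hy] <;>
    simp (disch := first | fun_prop | simp [hy]) [pd, barthelCurvature]
  field_simp
  ring

lemma Rb_three_one_three (x : Fin 4 → ℝ) {y : Fin 4 → ℝ} (hy : y 1 ≠ 0)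
    (hT : (y 1) ^ 3 + (y 2) ^ 3 + (y 3) ^ 3 = 0) (j : Fin 4) :
    Rb x y 3 1 j 3 = ![0, -(9/16), -(9/16 * (y 2)^2 / (y 1)^2), 0] j := by
  fin_cases j <;> rw [Rb_eq_pd_barthelCurvature x hy] <;>
    simp (disch := first | fun_prop | simp [hy]) [pd, barthelCurvature, hT] <;>
    field_simp
  norm_num

lemma Rb_two_one_two (x : Fin 4 → ℝ) {y : Fin 4 → ℝ} (hy : y 1 ≠ 0)
    (hT : (y 1) ^ 3 + (y 2) ^ 3 + (y 3) ^ 3 = 0) (j : Fin 4) :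
    Rb x y 2 1 j 2 = ![0, -(9/16), 0, -(9/16 * (y 3)^2 / (y 1)^2)] j := by
  fin_cases j <;> rw [Rb_eq_pd_barthelCurvature x hy] <;>
    simp (disch := first | fun_prop | simp [hy]) [pd, barthelCurvature, hT] <;>
    field_simp
  norm_num

def barthelNullity (x y : Fin 4 → ℝ) : Set (Fin 4 → ℝ) :=
  {Z | ∀ i j : Fin 4, ∑ k, Z k * Rg x y i j k = 0}

def berwaldNullity (x y : Fin 4 → ℝ) : Set (Fin 4 → ℝ) :=
  {W | ∀ i h k : Fin 4, ∑ j, W j * Rb x y i h j k = 0}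

lemma mem_barthelNullity_of (x : Fin 4 → ℝ) {y : Fin 4 → ℝ} (hy : y 1 ≠ 0)
    (hT : (y 1) ^ 3 + (y 2) ^ 3 + (y 3) ^ 3 = 0) {Z : Fin 4 → ℝ} (h2 : Z 2 = 0) (h3 : Z 3 = 0) :
    Z ∈ barthelNullity x y := by
  intro i j
  simp [Fin.sum_univ_four, Rg_apply_zero x hy, Rg_apply_one x hy hT, h2, h3]

lemma eq_zero_of_mem_berwaldNullity (x : Fin 4 → ℝ) {y : Fin 4 → ℝ} (hy1 : y 1 ≠ 0)
    (hy3 : y 3 ≠ 0) (hT : (y 1) ^ 3 + (y 2) ^ 3 + (y 3) ^ 3 = 0) {W : Fin 4 → ℝ}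
    (hW : W ∈ berwaldNullity x y) : W 1 = 0 ∧ W 2 = 0 ∧ W 3 = 0 := by
  have h2 : W 2 = 0 := by
    simpa [Fin.sum_univ_four, Rb_two_three_three x hy1, hy1, hy3] using hW 2 3 3
  have h1 : W 1 = 0 := by
    simpa [Fin.sum_univ_four, Rb_three_one_three x hy1 hT, h2] using hW 3 1 3
  have h3 : W 3 = 0 := by
    simpa [Fin.sum_univ_four, Rb_two_one_two x hy1 hT, h1, hy1, hy3] using hW 2 1 2
  exact ⟨h1, h2, h3⟩

/-- on `{y2 ≠ 0, y4 ≠ 0, y2³+y3³+y4³ = 0}`, the nullity space of the Barthel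
curvature `ℜ` strictly contains the nullity space of the Berwald h-curvature `R̊`; in
particular `h₂` lies in `N_ℜ` but not in `N_{R̊}`, so `N_ℜ` is not contained in `N_{R̊}`. -/
theorem statement13 :
    ∀ x y : Fin 4 → ℝ, U x y → (y 1) ^ 3 + (y 2) ^ 3 + (y 3) ^ 3 = 0 →
      ({W : Fin 4 → ℝ | ∀ i h k : Fin 4, (∑ j, W j * Rb x y i h j k) = 0} ⊂
          {Z : Fin 4 → ℝ | ∀ i j : Fin 4, (∑ k, Z k * Rg x y i j k) = 0}) ∧
      (Pi.single 1 1 : Fin 4 → ℝ) ∈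
        {Z : Fin 4 → ℝ | ∀ i j : Fin 4, (∑ k, Z k * Rg x y i j k) = 0} ∧
      (Pi.single 1 1 : Fin 4 → ℝ) ∉
        {W : Fin 4 → ℝ | ∀ i h k : Fin 4, (∑ j, W j * Rb x y i h j k) = 0} := by
  rintro x y ⟨hy1, hy3⟩ hT
  change berwaldNullity x y ⊂ barthelNullity x y ∧ _ ∈ barthelNullity x y ∧ _ ∉ berwaldNullity x y
  have hsub : berwaldNullity x y ⊆ barthelNullity x y := fun W hW =>
    have ⟨_, h2, h3⟩ := eq_zero_of_mem_berwaldNullity x hy1 hy3 hT hW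
    mem_barthelNullity_of x hy1 hT h2 h3
  have hmem : Pi.single 1 1 ∈ barthelNullity x y :=
    mem_barthelNullity_of x hy1 hT (by simp) (by simp)
  have hnmem : Pi.single 1 1 ∉ berwaldNullity x y := fun h => by
    simpa using (eq_zero_of_mem_berwaldNullity x hy1 hy3 hT h).1
  exact ⟨ssubset_of_subset_not_subset hsub fun h => hnmem (h hmem), hmem, hnmem⟩
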